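/- arXiv:1112.2020 — 6 statements merged into one kernel-verified Lean document; each statement's English description precedes it below -/
import Mathlib

section
/- For every real λ > 0 and all reals a, b, x, the Laplace densities centered at a and at b satisfy the pointwise ratio bound (1/(2λ))·exp(−|x−a|/λ) ≤ exp(|a−b|/λ) · (1/(2λ))·exp(−|x−b|/λ). In particular, if ε > 0, Δf > 0, λ = Δf/ε and |a−b| ≤ Δf, then (1/(2λ))·exp(−|x−a|/λ) ≤ exp(ε) · (1/(2λ))·exp(−|x−b|/λ). -/
open Real

noncomputable def laplacePDF (lam c x : ℝ) : ℝ :=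
  1 / (2 * lam) * exp (-|x - c| / lam)

section

variable {lam : ℝ}

lemma laplacePDF_nonneg (hlam : 0 ≤ lam) (c x : ℝ) : 0 ≤ laplacePDF lam c x := by
  unfold laplacePDF
  positivity

lemma laplacePDF_le_exp_mul (hlam : 0 ≤ lam) (a b x : ℝ) :
    laplacePDF lam a x ≤ exp (|a - b| / lam) * laplacePDF lam b x := by
  unfold laplacePDF
  rw [mul_left_comm, ← exp_add, ← add_div]
  gcongr
  linarith [abs_sub_le x a b]

lemma laplacePDF_le_exp_mul_of_le (hlam : 0 ≤ lam) {a b t : ℝ} (ht : |a - b| / lam ≤ t) (x : ℝ) :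
    laplacePDF lam a x ≤ exp t * laplacePDF lam b x :=
  (laplacePDF_le_exp_mul hlam a b x).trans <|
    mul_le_mul_of_nonneg_right (exp_le_exp.2 ht) (laplacePDF_nonneg hlam b x)

end

/-- Pointwise ratio bound between Laplace densities centered at `a` and `b`, and its
specialization λ = Δf/ε, |a − b| ≤ Δf (the density-ratio core of the Laplace mechanism). -/
theorem laplace_density_ratio (lam : ℝ) (hlam : 0 < lam) (a b x : ℝ) :
    (1 / (2 * lam)) * Real.exp (-|x - a| / lam)
      ≤ Real.exp (|a - b| / lam) * ((1 / (2 * lam)) * Real.exp (-|x - b| / lam)) ∧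
    (∀ ε Δf : ℝ, 0 < ε → 0 < Δf → lam = Δf / ε → |a - b| ≤ Δf →
      (1 / (2 * lam)) * Real.exp (-|x - a| / lam)
        ≤ Real.exp ε * ((1 / (2 * lam)) * Real.exp (-|x - b| / lam))) := by
  refine ⟨laplacePDF_le_exp_mul hlam.le a b x, fun ε Δf hε hΔf hlam_eq hab => ?_⟩
  have hratio : |a - b| / lam ≤ ε := by
    rw [hlam_eq, div_div_eq_mul_div, div_le_iff₀ hΔf, mul_comm ε]
    exact mul_le_mul_of_nonneg_right hab hε.le
  exact laplacePDF_le_exp_mul_of_le hlam.le hratio x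
end

section
/- Let λ > 0 and let μ_c denote the measure on ℝ with density x ↦ (1/(2λ))·exp(−|x−c|/λ) with respect to Lebesgue measure. Then for all reals a, b and every measurable set S ⊆ ℝ, μ_a(S) ≤ exp(|a−b|/λ) · μ_b(S). -/
open Real MeasureTheory

open scoped ENNReal

theorem MeasureTheory.Measure.withDensity_le_smul_withDensity {α : Type*} [MeasurableSpace α]
    {μ : Measure α} {f g : α → ℝ≥0∞} {r : ℝ≥0∞} (hr : r ≠ ∞) (hfg : ∀ᵐ x ∂μ, f x ≤ r * g x) :
    μ.withDensity f ≤ r • μ.withDensity g := by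
  rw [← withDensity_smul' r g hr]
  exact withDensity_mono hfg

theorem Real.exp_neg_dist_div_le {X : Type*} [PseudoMetricSpace X] {lam : ℝ} (hlam : 0 ≤ lam)
    (x a b : X) :
    exp (-dist x a / lam) ≤ exp (dist a b / lam) * exp (-dist x b / lam) := by
  rw [← exp_add, exp_le_exp, ← add_div]
  gcongr
  linarith [dist_triangle x a b]

theorem laplace_measure_ratio_general (lam : ℝ) (hlam : 0 < lam)
    (μ : ℝ → Measure ℝ)
    (hμ : ∀ c, μ c = volume.withDensity
      (fun x => ENNReal.ofReal ((1 / (2 * lam)) * Real.exp (-|x - c| / lam))))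
    (a b : ℝ) (S : Set ℝ) :
    μ a S ≤ ENNReal.ofReal (Real.exp (|a - b| / lam)) * μ b S := by
  have hdensity (x : ℝ) :
      ENNReal.ofReal (1 / (2 * lam) * exp (-|x - a| / lam)) ≤
        ENNReal.ofReal (exp (|a - b| / lam)) *
          ENNReal.ofReal (1 / (2 * lam) * exp (-|x - b| / lam)) := by
    rw [← ENNReal.ofReal_mul (exp_nonneg _), mul_left_comm]
    gcongr
    simpa only [Real.dist_eq] using exp_neg_dist_div_le hlam.le x a b
  rw [hμ a, hμ b]
  exact Measure.withDensity_le_smul_withDensity ENNReal.ofReal_ne_top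
    (ae_of_all _ hdensity) S

/-- Measure-theoretic form of the Laplace mechanism: if μ_c is the measure on ℝ with
density x ↦ (1/(2λ))·exp(−|x−c|/λ) with respect to Lebesgue measure, then for all a, b
and every measurable set S, μ_a(S) ≤ exp(|a−b|/λ) · μ_b(S). -/
theorem laplace_measure_ratio (lam : ℝ) (hlam : 0 < lam)
    (μ : ℝ → Measure ℝ)
    (hμ : ∀ c, μ c = volume.withDensity
      (fun x => ENNReal.ofReal ((1 / (2 * lam)) * Real.exp (-|x - c| / lam))))
    (a b : ℝ) (S : Set ℝ) (hS : MeasurableSet S) :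
    μ a S ≤ ENNReal.ofReal (Real.exp (|a - b| / lam)) * μ b S :=
  laplace_measure_ratio_general lam hlam μ hμ a b S
end

section
/- Let R be a nonempty finite set, ε > 0, Δq > 0, and let q₁, q₂ : R → ℝ satisfy |q₁(r) − q₂(r)| ≤ Δq for every r ∈ R. Then for every r ∈ R, exp(ε·q₁(r)/(2Δq)) / (∑_{r'∈R} exp(ε·q₁(r')/(2Δq))) ≤ exp(ε) · exp(ε·q₂(r)/(2Δq)) / (∑_{r'∈R} exp(ε·q₂(r')/(2Δq))). -/
open Real Finset

/-!
The scaled scores `ε qᵢ / (2Δq)` differ by at most `ε / 2`, so each weight `exp (ε qᵢ r / (2Δq))`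
is within a factor `exp (ε / 2)` of the other. That factor is paid once in the numerator and once
in the normalizing sum, giving `exp ε` in total.
-/

theorem div_sum_le_mul_div_sum {ι : Type*} {S : Finset ι} {w₁ w₂ : ι → ℝ} {a b : ℝ}
    (hw₁ : ∀ x ∈ S, 0 < w₁ x) (hw₂ : ∀ x ∈ S, 0 < w₂ x)
    (h₁₂ : ∀ x ∈ S, w₁ x ≤ a * w₂ x) (h₂₁ : ∀ x ∈ S, w₂ x ≤ b * w₁ x) {r : ι} (hr : r ∈ S) :
    w₁ r / ∑ x ∈ S, w₁ x ≤ a * b * (w₂ r / ∑ x ∈ S, w₂ x) := by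
  have hsum₁ : 0 < ∑ x ∈ S, w₁ x := sum_pos hw₁ ⟨r, hr⟩
  have hsum₂ : 0 < ∑ x ∈ S, w₂ x := sum_pos hw₂ ⟨r, hr⟩
  have hsum : ∑ x ∈ S, w₂ x ≤ b * ∑ x ∈ S, w₁ x := by
    rw [mul_sum]
    exact sum_le_sum h₂₁
  rw [mul_div_assoc', div_le_div_iff₀ hsum₁ hsum₂]
  calc w₁ r * ∑ x ∈ S, w₂ x
      ≤ (a * w₂ r) * (b * ∑ x ∈ S, w₁ x) :=
        mul_le_mul (h₁₂ r hr) hsum hsum₂.le ((hw₁ r hr).le.trans (h₁₂ r hr))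
    _ = a * b * w₂ r * ∑ x ∈ S, w₁ x := by ring

theorem exp_div_sum_exp_le_of_abs_sub_le {ι : Type*} {S : Finset ι} {f g : ι → ℝ} {δ : ℝ}
    (hfg : ∀ x ∈ S, |f x - g x| ≤ δ) {r : ι} (hr : r ∈ S) :
    exp (f r) / ∑ x ∈ S, exp (f x) ≤ exp (2 * δ) * (exp (g r) / ∑ x ∈ S, exp (g x)) := by
  have hle : ∀ {u v : ℝ}, u - v ≤ δ → exp u ≤ exp δ * exp v := by
    intro u v h
    rw [← exp_add]
    exact exp_le_exp.2 (by linarith)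
  rw [two_mul, exp_add]
  exact div_sum_le_mul_div_sum (fun x _ => exp_pos _) (fun x _ => exp_pos _)
    (fun x hx => hle (abs_sub_le_iff.1 (hfg x hx)).1)
    (fun x hx => hle (abs_sub_le_iff.1 (hfg x hx)).2) hr

theorem exponential_mechanism_dp_general {R : Type*} (S : Finset R)
    (ε Δq : ℝ) (hε : 0 < ε) (hΔq : 0 < Δq) (q₁ q₂ : R → ℝ)
    (hsens : ∀ r ∈ S, |q₁ r - q₂ r| ≤ Δq) :
    ∀ r ∈ S,
      Real.exp (ε * q₁ r / (2 * Δq)) / (∑ r' ∈ S, Real.exp (ε * q₁ r' / (2 * Δq)))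
        ≤ Real.exp ε *
          (Real.exp (ε * q₂ r / (2 * Δq)) / (∑ r' ∈ S, Real.exp (ε * q₂ r' / (2 * Δq)))) := by
  intro r hr
  have hscaled : ∀ x ∈ S, |ε * q₁ x / (2 * Δq) - ε * q₂ x / (2 * Δq)| ≤ ε / 2 := by
    intro x hx
    have h2Δq : (0 : ℝ) < 2 * Δq := by positivity
    rw [← sub_div, ← mul_sub, abs_div, abs_mul, abs_of_pos hε, abs_of_pos h2Δq, div_le_iff₀ h2Δq]
    linarith [mul_le_mul_of_nonneg_left (hsens x hx) hε.le]
  simpa only [mul_div_cancel₀ ε two_ne_zero] using exp_div_sum_exp_le_of_abs_sub_le hscaled hr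

/-- The exponential mechanism gives ε-differential privacy: if the utility scores on two
neighboring databases differ by at most Δq pointwise, then the selection probabilities
differ by a factor of at most exp(ε). -/
theorem exponential_mechanism_dp {R : Type*} (S : Finset R) (hS : S.Nonempty)
    (ε Δq : ℝ) (hε : 0 < ε) (hΔq : 0 < Δq) (q₁ q₂ : R → ℝ)
    (hsens : ∀ r ∈ S, |q₁ r - q₂ r| ≤ Δq) :
    ∀ r ∈ S,
      Real.exp (ε * q₁ r / (2 * Δq)) / (∑ r' ∈ S, Real.exp (ε * q₁ r' / (2 * Δq)))
        ≤ Real.exp ε *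
          (Real.exp (ε * q₂ r / (2 * Δq)) / (∑ r' ∈ S, Real.exp (ε * q₂ r' / (2 * Δq)))) :=
  exponential_mechanism_dp_general S ε Δq hε hΔq q₁ q₂ hsens
end

section
/- Let I be a nonempty finite index set, and for each i ∈ I let εᵢ ≥ 0 and let fᵢ, gᵢ be nonnegative reals with fᵢ ≤ exp(εᵢ)·gᵢ. Suppose there is at most one index j ∈ I with fⱼ ≠ gⱼ. Then ∏_{i∈I} fᵢ ≤ exp(max_{i∈I} εᵢ) · ∏_{i∈I} gᵢ. -/
open Real

namespace Finset

variable {ι : Type*}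

theorem exists_mem_eq_off_of_subsingleton_ne {α : Type*} {s : Finset ι} (hs : s.Nonempty)
    {f g : ι → α} (hone : ∀ i ∈ s, ∀ j ∈ s, f i ≠ g i → f j ≠ g j → i = j) :
    ∃ j ∈ s, ∀ i ∈ s, i ≠ j → f i = g i := by
  by_cases hex : ∃ j ∈ s, f j ≠ g j
  · obtain ⟨j, hj, hfj⟩ := hex
    exact ⟨j, hj, fun i hi hij => by_contra fun hfi => hij (hone i hi j hj hfi hfj)⟩
  · obtain ⟨j, hj⟩ := hs
    exact ⟨j, hj, fun i hi _ => not_not.mp fun hfi => hex ⟨i, hi, hfi⟩⟩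

theorem prod_le_mul_prod_of_eq_off {R : Type*} [CommSemiring R] [PartialOrder R]
    [IsOrderedRing R] {s : Finset ι} {f g : ι → R} {c : R} {j : ι} (hj : j ∈ s)
    (hfj : f j ≤ c * g j) (hoff : ∀ i ∈ s, i ≠ j → f i = g i) (hg : ∀ i ∈ s, 0 ≤ g i) :
    ∏ i ∈ s, f i ≤ c * ∏ i ∈ s, g i := by
  classical
  have hrest : ∏ i ∈ s.erase j, f i = ∏ i ∈ s.erase j, g i :=
    prod_congr rfl fun i hi => hoff i (mem_of_mem_erase hi) (ne_of_mem_erase hi)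
  rw [← mul_prod_erase s f hj, ← mul_prod_erase s g hj, hrest, ← mul_assoc]
  exact mul_le_mul_of_nonneg_right hfj (prod_nonneg fun i hi => hg i (mem_of_mem_erase hi))

end Finset

theorem parallel_composition_general {I : Type*} (s : Finset I) (hs : s.Nonempty) (ε f g : I → ℝ)
    (hg : ∀ i ∈ s, 0 ≤ g i)
    (h : ∀ i ∈ s, f i ≤ Real.exp (ε i) * g i)
    (hone : ∀ i ∈ s, ∀ j ∈ s, f i ≠ g i → f j ≠ g j → i = j) :
    ∏ i ∈ s, f i ≤ Real.exp (s.sup' hs ε) * ∏ i ∈ s, g i := by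
  obtain ⟨j, hj, hoff⟩ := s.exists_mem_eq_off_of_subsingleton_ne hs hone
  refine Finset.prod_le_mul_prod_of_eq_off hj ?_ hoff hg
  calc f j ≤ Real.exp (ε j) * g j := h j hj
    _ ≤ Real.exp (s.sup' hs ε) * g j := by
      gcongr
      · exact hg j hj
      · exact s.le_sup' ε hj

/-- Parallel composition core: if fᵢ ≤ exp(εᵢ)·gᵢ for nonnegative reals and fᵢ = gᵢ for all
but at most one index, then ∏ᵢ fᵢ ≤ exp(maxᵢ εᵢ)·∏ᵢ gᵢ. -/
theorem parallel_composition {I : Type*} (s : Finset I) (hs : s.Nonempty) (ε f g : I → ℝ)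
    (hε : ∀ i ∈ s, 0 ≤ ε i) (hf : ∀ i ∈ s, 0 ≤ f i) (hg : ∀ i ∈ s, 0 ≤ g i)
    (h : ∀ i ∈ s, f i ≤ Real.exp (ε i) * g i)
    (hone : ∀ i ∈ s, ∀ j ∈ s, f i ≠ g i → f j ≠ g j → i = j) :
    ∏ i ∈ s, f i ≤ Real.exp (s.sup' hs ε) * ∏ i ∈ s, g i :=
  parallel_composition_general s hs ε f g hg h hone
end

section
/- Let n ≥ 1 and let c : {1,…,n} → ℝ be a sequence of reals. For 1 ≤ i ≤ j ≤ n define mean[i,j] = (∑_{m=i}^{j} c(m)) / (j − i + 1). Then for every m with 1 ≤ m ≤ n, min_{j ∈ [m,n]} max_{i ∈ [1,j]} mean[i,j] = max_{i ∈ [1,m]} min_{j ∈ [i,n]} mean[i,j]; that is, the sequences L_m = min_{j ∈ [m,n]} max_{i ∈ [1,j]} mean[i,j] and U_m = max_{i ∈ [1,m]} min_{j ∈ [i,n]} mean[i,j] coincide. -/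
/-!
Fix `t` and write `G k = ∑_{x < k} (c x - t)`. Then `t ≤ mean[i,j]` iff `G i ≤ G (j+1)`, so `t ≤ L_m` says that
every value `G b` with `m < b ≤ n+1` dominates some earlier value `G a`, `1 ≤ a`, while `t ≤ U_m` says
that some `G a` with `1 ≤ a ≤ m` is a minimum of `G` on `[1, n+1]`. A minimiser of `G` on `[1, m]` is
such an `a`, by strong induction along the chains of earlier dominated values.
-/

open Finset

/-- The mean of the subsequence c(i), …, c(j). -/
noncomputable def seqMean (c : ℕ → ℝ) (i j : ℕ) : ℝ :=
  (∑ m ∈ Finset.Icc i j, c m) / ((j - i + 1 : ℕ) : ℝ)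

/-- L_m = min_{j ∈ [m,n]} max_{i ∈ [1,j]} mean[i,j].  (For 1 ≤ m ≤ n the `min`/`max`
with the index bounds below coincide with the intended ranges.) -/
noncomputable def Lest (c : ℕ → ℝ) (n m : ℕ) : ℝ :=
  (Finset.Icc (min m n) n).inf' (Finset.nonempty_Icc.mpr (min_le_right m n))
    fun j => (Finset.Icc 1 (max j 1)).sup' (Finset.nonempty_Icc.mpr (le_max_right j 1))
      fun i => seqMean c i j

/-- U_m = max_{i ∈ [1,m]} min_{j ∈ [i,n]} mean[i,j]. -/
noncomputable def Uest (c : ℕ → ℝ) (n m : ℕ) : ℝ :=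
  (Finset.Icc 1 (max m 1)).sup' (Finset.nonempty_Icc.mpr (le_max_right m 1))
    fun i => (Finset.Icc (min i n) n).inf' (Finset.nonempty_Icc.mpr (min_le_right i n))
      fun j => seqMean c i j

theorem exists_isMinOn_Icc_of_forall_exists_le {α : Type*} [LinearOrder α] (g : ℕ → α)
    {l m n : ℕ} (hlm : l < m) (h : ∀ b ∈ Icc m n, ∃ a ∈ Ico l b, g a ≤ g b) :
    ∃ a ∈ Ico l m, IsMinOn g (Set.Icc l n) a := by
  obtain ⟨a, ha, hmin⟩ := (Ico l m).exists_min_image g (nonempty_Ico.2 hlm)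
  refine ⟨a, ha, isMinOn_iff.2 fun b hb => ?_⟩
  induction b using Nat.strong_induction_on with
  | _ b ih =>
    by_cases hbm : b < m
    · exact hmin b (mem_Ico.2 ⟨hb.1, hbm⟩)
    · obtain ⟨a', ha', hle⟩ := h b (mem_Icc.2 ⟨not_lt.1 hbm, hb.2⟩)
      rw [mem_Ico] at ha'
      exact (ih a' ha'.2 ⟨ha'.1, ha'.2.le.trans hb.2⟩).trans hle

noncomputable def shiftedPrefixSum (c : ℕ → ℝ) (t : ℝ) (k : ℕ) : ℝ :=
  ∑ x ∈ range k, (c x - t)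

theorem le_seqMean_iff (c : ℕ → ℝ) (t : ℝ) {i j : ℕ} (hij : i ≤ j) :
    t ≤ seqMean c i j ↔ shiftedPrefixSum c t i ≤ shiftedPrefixSum c t (j + 1) := by
  have hlen : ((j - i + 1 : ℕ) : ℝ) = #(Icc i j) := by rw [Nat.card_Icc]; congr 1; omega
  have hdiff : shiftedPrefixSum c t (j + 1) - shiftedPrefixSum c t i
      = ∑ x ∈ Icc i j, c x - ((j - i + 1 : ℕ) : ℝ) * t := by
    rw [shiftedPrefixSum, shiftedPrefixSum, ← sum_Ico_eq_sub _ (by omega), Ico_add_one_right_eq_Icc,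
      sum_sub_distrib, sum_const, nsmul_eq_mul, hlen]
  rw [seqMean, le_div_iff₀ (by positivity), ← sub_nonneg (b := shiftedPrefixSum c t i), hdiff,
    sub_nonneg, mul_comm]

theorem le_Lest_iff {c : ℕ → ℝ} {n m : ℕ} {t : ℝ} (hm1 : 1 ≤ m) (hmn : m ≤ n) :
    t ≤ Lest c n m ↔ ∀ j ∈ Icc m n, ∃ i ∈ Icc 1 j, t ≤ seqMean c i j := by
  simp only [Lest, le_inf'_iff, le_sup'_iff, min_eq_left hmn]
  refine forall₂_congr fun j hj => ?_
  rw [max_eq_left (hm1.trans (mem_Icc.1 hj).1)]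

theorem le_Uest_iff {c : ℕ → ℝ} {n m : ℕ} {t : ℝ} (hm1 : 1 ≤ m) (hmn : m ≤ n) :
    t ≤ Uest c n m ↔ ∃ i ∈ Icc 1 m, ∀ j ∈ Icc i n, t ≤ seqMean c i j := by
  simp only [Uest, le_inf'_iff, le_sup'_iff, max_eq_left hm1]
  refine exists_congr fun i => and_congr_right fun hi => ?_
  rw [min_eq_left ((mem_Icc.1 hi).2.trans hmn)]

theorem exists_forall_le_seqMean_of_forall_exists_le {c : ℕ → ℝ} {n m : ℕ} {t : ℝ}
    (hm1 : 1 ≤ m) (h : ∀ j ∈ Icc m n, ∃ i ∈ Icc 1 j, t ≤ seqMean c i j) :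
    ∃ i ∈ Icc 1 m, ∀ j ∈ Icc i n, t ≤ seqMean c i j := by
  have hdom : ∀ b ∈ Icc (m + 1) (n + 1), ∃ a ∈ Ico 1 b,
      shiftedPrefixSum c t a ≤ shiftedPrefixSum c t b := by
    intro b hb
    rw [mem_Icc] at hb
    obtain ⟨i, hi, hle⟩ := h (b - 1) (mem_Icc.2 ⟨by omega, by omega⟩)
    rw [mem_Icc] at hi
    refine ⟨i, mem_Ico.2 ⟨hi.1, by omega⟩, ?_⟩
    rwa [le_seqMean_iff c t hi.2, Nat.sub_add_cancel (by omega)] at hle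
  obtain ⟨a, ha, hmin⟩ := exists_isMinOn_Icc_of_forall_exists_le _ (by omega) hdom
  rw [mem_Ico] at ha
  refine ⟨a, mem_Icc.2 ⟨ha.1, by omega⟩, fun j hj => ?_⟩
  rw [mem_Icc] at hj
  exact (le_seqMean_iff c t hj.1).2 (isMinOn_iff.1 hmin (j + 1) ⟨by omega, by omega⟩)

theorem minmax_eq_maxmin_general (n : ℕ) (c : ℕ → ℝ) (m : ℕ)
    (hm1 : 1 ≤ m) (hmn : m ≤ n) :
    Lest c n m = Uest c n m := by
  refine eq_of_forall_le_iff fun t => ?_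
  rw [le_Lest_iff hm1 hmn, le_Uest_iff hm1 hmn]
  refine ⟨exists_forall_le_seqMean_of_forall_exists_le hm1, fun ⟨i, hi, h⟩ j hj => ?_⟩
  rw [mem_Icc] at hi hj
  exact ⟨i, mem_Icc.2 ⟨hi.1, hi.2.trans hj.1⟩, h j (mem_Icc.2 ⟨hi.2.trans hj.1, hj.2⟩)⟩

/-- Theorem 6 (first part): the min-max and max-min estimates coincide,
L_m = U_m for every 1 ≤ m ≤ n. -/
theorem minmax_eq_maxmin (n : ℕ) (hn : 1 ≤ n) (c : ℕ → ℝ) (m : ℕ)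
    (hm1 : 1 ≤ m) (hmn : m ≤ n) :
    Lest c n m = Uest c n m :=
  minmax_eq_maxmin_general n c m hm1 hmn
end

section
/- Let n ≥ 1 and let c : {1,…,n} → ℝ be a sequence of reals. For 1 ≤ i ≤ j ≤ n define mean[i,j] = (∑_{m=i}^{j} c(m)) / (j − i + 1), and for 1 ≤ m ≤ n define L_m = min_{j ∈ [m,n]} max_{i ∈ [1,j]} mean[i,j]. Then L minimizes the squared L2 distance to c among all nondecreasing sequences: for every T : {1,…,n} → ℝ with T_1 ≤ T_2 ≤ ⋯ ≤ T_n, one has ∑_{m=1}^{n} (c(m) − L_m)² ≤ ∑_{m=1}^{n} (c(m) − T_m)². -/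
/-!
Write `M_j = max_{i ≤ j} mean[i,j]`, so `L_m = min_{m ≤ j ≤ n} M_j`, and call `b` a block end
when `M_b ≤ M_j` for all `j ∈ [b, n]` (e.g. `b = n`, or any `b` where `L` jumps). If
`mean[a+1, b]` realises `M_b`, then `L ≡ M_b` on `[a+1, b]`, the partial sums of `c - M_b` from
`a+1` are nonnegative and vanish at `b`, and `a` is again a block end. By induction the residual
`r = c - L` has nonnegative partial sums `P_k` that vanish at `n` and wherever `L` jumps.
Summation by parts then gives `∑ r (T - L) = -∑ P_k ((T - L)_{k+1} - (T - L)_k) ≤ 0` for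
nondecreasing `T`, and expanding `∑ (c - T)² = ∑ (r - (T - L))²` finishes the proof.
-/

open Finset

lemma Finset.sum_Icc_add_one_consecutive {M : Type*} [AddCommMonoid M] (f : ℕ → M) {a b c : ℕ}
    (hab : a ≤ b) (hbc : b ≤ c) :
    ∑ m ∈ Icc (a + 1) c, f m = ∑ m ∈ Icc (a + 1) b, f m + ∑ m ∈ Icc (b + 1) c, f m := by
  simp only [Icc_add_one_left_eq_Ioc]
  exact (sum_Ioc_consecutive f hab hbc).symm

theorem sum_sq_sub_le_of_sum_mul_nonpos {ι : Type*} (s : Finset ι) (x y z : ι → ℝ)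
    (h : ∑ i ∈ s, (x i - y i) * (z i - y i) ≤ 0) :
    ∑ i ∈ s, (x i - y i) ^ 2 ≤ ∑ i ∈ s, (x i - z i) ^ 2 := by
  have hexpand : ∑ i ∈ s, (x i - z i) ^ 2 = ∑ i ∈ s, (x i - y i) ^ 2
      - 2 * ∑ i ∈ s, (x i - y i) * (z i - y i) + ∑ i ∈ s, (z i - y i) ^ 2 := by
    rw [mul_sum, ← sum_sub_distrib, ← sum_add_distrib]
    exact sum_congr rfl fun _ _ => by ring
  have hsq : 0 ≤ ∑ i ∈ s, (z i - y i) ^ 2 := sum_nonneg fun _ _ => sq_nonneg _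
  linarith

-- Summation by parts: the right side minus the left is `∑_{1 ≤ k < N} P_k (d_{k+1} - d_k)`,
-- where `P_k = ∑_{m ≤ k} r m`.
theorem sum_mul_le_partialSum_mul (r d : ℕ → ℝ) (N : ℕ)
    (h : ∀ k, 1 ≤ k → k < N →
      (∑ m ∈ Icc 1 k, r m) * d k ≤ (∑ m ∈ Icc 1 k, r m) * d (k + 1)) :
    ∑ m ∈ Icc 1 N, r m * d m ≤ (∑ m ∈ Icc 1 N, r m) * d N := by
  induction N with
  | zero => simp
  | succ N ih =>
    have hstep : (∑ m ∈ Icc 1 N, r m) * d N ≤ (∑ m ∈ Icc 1 N, r m) * d (N + 1) := by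
      rcases N.eq_zero_or_pos with rfl | hN
      · simp
      · exact h N hN N.lt_succ_self
    rw [sum_Icc_succ_top (by omega), sum_Icc_succ_top (by omega), add_mul]
    linarith [ih fun k hk hkN => h k hk (by omega)]

section seqMean

variable (c : ℕ → ℝ) (v : ℝ) {i j : ℕ}

theorem sum_sub_eq_mul_seqMean_sub (hij : i ≤ j) :
    ∑ m ∈ Icc i j, (c m - v) = ((j - i + 1 : ℕ) : ℝ) * (seqMean c i j - v) := by
  have hcard : #(Icc i j) = j - i + 1 := by rw [Nat.card_Icc]; omega
  have hpos : ((j - i + 1 : ℕ) : ℝ) ≠ 0 := by positivity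
  rw [sum_sub_distrib, sum_const, nsmul_eq_mul, hcard, seqMean, mul_sub,
    mul_div_cancel₀ _ hpos]

variable {c v}

theorem seqMean_le_iff (hij : i ≤ j) :
    seqMean c i j ≤ v ↔ ∑ m ∈ Icc i j, (c m - v) ≤ 0 := by
  rw [sum_sub_eq_mul_seqMean_sub c v hij, ← neg_nonneg, ← mul_neg,
    mul_nonneg_iff_of_pos_left (by positivity), neg_nonneg, sub_nonpos]

theorem le_seqMean_iff_s12 (hij : i ≤ j) :
    v ≤ seqMean c i j ↔ 0 ≤ ∑ m ∈ Icc i j, (c m - v) := by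
  rw [sum_sub_eq_mul_seqMean_sub c v hij, mul_nonneg_iff_of_pos_left (by positivity), sub_nonneg]

theorem seqMean_eq_iff (hij : i ≤ j) :
    seqMean c i j = v ↔ ∑ m ∈ Icc i j, (c m - v) = 0 := by
  rw [sum_sub_eq_mul_seqMean_sub c v hij, mul_eq_zero, sub_eq_zero, or_iff_right (by positivity)]

end seqMean

-- `Lest c n m` unfolds to the `inf'` of `maxMean c` over `Icc (min m n) n`.
noncomputable def maxMean (c : ℕ → ℝ) (j : ℕ) : ℝ :=
  (Icc 1 (max j 1)).sup' (nonempty_Icc.mpr (le_max_right j 1)) fun i => seqMean c i j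

section maxMean

variable (c : ℕ → ℝ) {n m i j k : ℕ}

theorem seqMean_le_maxMean (hi : 1 ≤ i) (hij : i ≤ j) : seqMean c i j ≤ maxMean c j :=
  le_sup' (fun i => seqMean c i j) (mem_Icc.mpr ⟨hi, hij.trans (le_max_left j 1)⟩)

theorem sum_sub_maxMean_nonpos (hi : 1 ≤ i) : ∑ m ∈ Icc i j, (c m - maxMean c j) ≤ 0 := by
  rcases le_or_gt i j with hij | hji
  · exact (seqMean_le_iff hij).mp (seqMean_le_maxMean c hi hij)
  · rw [Icc_eq_empty_of_lt hji, sum_empty]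

theorem exists_seqMean_eq_maxMean (hj : 1 ≤ j) :
    ∃ a < j, seqMean c (a + 1) j = maxMean c j := by
  obtain ⟨i, hi, heq⟩ := exists_mem_eq_sup' (nonempty_Icc.mpr (le_max_right j 1))
    fun i => seqMean c i j
  rw [mem_Icc, max_eq_left hj] at hi
  exact ⟨i - 1, by omega, by rw [Nat.sub_add_cancel hi.1]; exact heq.symm⟩

theorem maxMean_le {v : ℝ} (hj : 1 ≤ j) (h : ∀ i, 1 ≤ i → i ≤ j → seqMean c i j ≤ v) :
    maxMean c j ≤ v :=
  sup'_le _ _ fun i hi => by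
    rw [mem_Icc, max_eq_left hj] at hi
    exact h i hi.1 hi.2

theorem Lest_le_maxMean (hmj : m ≤ j) (hjn : j ≤ n) : Lest c n m ≤ maxMean c j :=
  inf'_le _ (mem_Icc.mpr ⟨(min_le_left m n).trans hmj, hjn⟩)

theorem le_Lest {v : ℝ} (hmn : m ≤ n) (h : ∀ j, m ≤ j → j ≤ n → v ≤ maxMean c j) :
    v ≤ Lest c n m :=
  le_inf' _ _ fun j hj => by
    rw [mem_Icc, min_eq_left hmn] at hj
    exact h j hj.1 hj.2

theorem Lest_eq_of_isMinOn {b : ℕ} (hmb : m ≤ b) (hbn : b ≤ n)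
    (h : IsMinOn (maxMean c) (Set.Icc m n) b) : Lest c n m = maxMean c b :=
  le_antisymm (Lest_le_maxMean c hmb hbn)
    (le_Lest c (hmb.trans hbn) fun j hmj hjn => isMinOn_iff.mp h j ⟨hmj, hjn⟩)

theorem Lest_eq_min (hkn : k < n) : Lest c n k = min (maxMean c k) (Lest c n (k + 1)) := by
  refine le_antisymm (le_min (Lest_le_maxMean c le_rfl hkn.le) ?_) (le_Lest c hkn.le ?_)
  · exact le_Lest c hkn fun j hkj hjn => Lest_le_maxMean c (by omega) hjn
  · intro j hkj hjn
    rcases hkj.eq_or_lt with rfl | hkj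
    · exact min_le_left _ _
    · exact (min_le_right _ _).trans (Lest_le_maxMean c hkj hjn)

theorem isMinOn_maxMean_of_Lest_ne (hkn : k < n) (h : Lest c n k ≠ Lest c n (k + 1)) :
    IsMinOn (maxMean c) (Set.Icc k n) k := by
  have hL : Lest c n k = maxMean c k := by
    rcases min_choice (maxMean c k) (Lest c n (k + 1)) with hmin | hmin
    · rwa [← Lest_eq_min c hkn] at hmin
    · exact absurd (hmin ▸ Lest_eq_min c hkn) h
  exact isMinOn_iff.mpr fun j hj => hL ▸ Lest_le_maxMean c hj.1 hj.2

end maxMean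

section block

variable (c : ℕ → ℝ) {n a b : ℕ} (hab : a < b) (hmean : seqMean c (a + 1) b = maxMean c b)
include hab hmean

theorem sum_sub_maxMean_nonneg_of_seqMean_eq {k : ℕ} (hak : a ≤ k) (hkb : k ≤ b) :
    0 ≤ ∑ m ∈ Icc (a + 1) k, (c m - maxMean c b) := by
  have hblock := (seqMean_eq_iff hab).mp hmean
  rw [sum_Icc_add_one_consecutive _ hak hkb] at hblock
  linarith [sum_sub_maxMean_nonpos c (j := b) (Nat.le_add_left 1 k)]

theorem maxMean_le_of_seqMean_eq (ha : 1 ≤ a) : maxMean c a ≤ maxMean c b := by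
  refine maxMean_le c ha fun i hi hia => (seqMean_le_iff hia).mpr ?_
  obtain ⟨i, rfl⟩ : ∃ i', i = i' + 1 := ⟨i - 1, by omega⟩
  have hsplit :=
    sum_Icc_add_one_consecutive (fun m => c m - maxMean c b) (by omega : i ≤ a) hab.le
  rw [(seqMean_eq_iff hab).mp hmean] at hsplit
  linarith [sum_sub_maxMean_nonpos c (i := i + 1) (j := b) (Nat.le_add_left 1 i)]

theorem maxMean_le_of_seqMean_eq_of_isMinOn (hb : IsMinOn (maxMean c) (Set.Icc b n) b)
    {j : ℕ} (haj : a < j) (hjn : j ≤ n) : maxMean c b ≤ maxMean c j := by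
  rcases le_total j b with hjb | hbj
  · have hmean_le : maxMean c b ≤ seqMean c (a + 1) j := (le_seqMean_iff_s12 haj).mpr
      (sum_sub_maxMean_nonneg_of_seqMean_eq c hab hmean haj.le hjb)
    exact hmean_le.trans (seqMean_le_maxMean c (Nat.le_add_left 1 a) haj)
  · exact isMinOn_iff.mp hb j ⟨hbj, hjn⟩

end block

theorem sum_sub_Lest_nonneg_and_eq_zero_of_isMinOn (c : ℕ → ℝ) (n : ℕ) :
    ∀ b ≤ n, (0 < b → IsMinOn (maxMean c) (Set.Icc b n) b) →
      (∀ k ≤ b, 0 ≤ ∑ m ∈ Icc 1 k, (c m - Lest c n m)) ∧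
        ∑ m ∈ Icc 1 b, (c m - Lest c n m) = 0 := by
  intro b
  induction b using Nat.strong_induction_on with
  | _ b ih =>
    intro hbn hb
    rcases b.eq_zero_or_pos with rfl | hb0
    · simp
    obtain ⟨a, hab, hmean⟩ := exists_seqMean_eq_maxMean c hb0
    have hge : ∀ {j}, a < j → j ≤ n → maxMean c b ≤ maxMean c j :=
      maxMean_le_of_seqMean_eq_of_isMinOn c hab hmean (hb hb0)
    have hconst : ∀ m, a < m → m ≤ b → Lest c n m = maxMean c b := fun m ham hmb =>
      Lest_eq_of_isMinOn c hmb hbn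
        (isMinOn_iff.mpr fun j hj => hge (ham.trans_le hj.1) hj.2)
    have hsplit : ∀ k, a ≤ k → k ≤ b → ∑ m ∈ Icc 1 k, (c m - Lest c n m) =
        ∑ m ∈ Icc 1 a, (c m - Lest c n m) + ∑ m ∈ Icc (a + 1) k, (c m - maxMean c b) := by
      intro k hak hkb
      rw [sum_Icc_add_one_consecutive _ (Nat.zero_le a) hak]
      congr 1
      exact sum_congr rfl fun m hm => by
        rw [hconst m (mem_Icc.mp hm).1 ((mem_Icc.mp hm).2.trans hkb)]
    obtain ⟨ih_nonneg, ih_zero⟩ := ih a hab (hab.le.trans hbn) fun ha =>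
      isMinOn_iff.mpr fun j hj => by
        rcases hj.1.eq_or_lt with rfl | haj
        · exact le_rfl
        · exact (maxMean_le_of_seqMean_eq c hab hmean ha).trans (hge haj hj.2)
    refine ⟨fun k hkb => ?_, ?_⟩
    · rcases le_total k a with hka | hak
      · exact ih_nonneg k hka
      · rw [hsplit k hak hkb]
        linarith [ih_nonneg a le_rfl, sum_sub_maxMean_nonneg_of_seqMean_eq c hab hmean hak hkb]
    · rw [hsplit b hab.le le_rfl, ih_zero, (seqMean_eq_iff hab).mp hmean, add_zero]

theorem Lest_min_L2_general (n : ℕ) (c : ℕ → ℝ) (T : ℕ → ℝ)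
    (hT : ∀ i j, 1 ≤ i → i ≤ j → j ≤ n → T i ≤ T j) :
    ∑ m ∈ Finset.Icc 1 n, (c m - Lest c n m) ^ 2
      ≤ ∑ m ∈ Finset.Icc 1 n, (c m - T m) ^ 2 := by
  obtain ⟨hnonneg, hzero⟩ := sum_sub_Lest_nonneg_and_eq_zero_of_isMinOn c n n le_rfl fun _ =>
    isMinOn_iff.mpr fun j hj => by rw [le_antisymm hj.2 hj.1]
  refine sum_sq_sub_le_of_sum_mul_nonpos _ _ _ _ ?_
  calc _ ≤ (∑ m ∈ Icc 1 n, (c m - Lest c n m)) * (T n - Lest c n n) :=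
        sum_mul_le_partialSum_mul _ _ n fun k hk hkn => ?_
    _ = 0 := by rw [hzero, zero_mul]
  by_cases hL : Lest c n k = Lest c n (k + 1)
  · rw [hL]
    exact mul_le_mul_of_nonneg_left (by linarith [hT k (k + 1) hk k.le_succ hkn])
      (hnonneg k hkn.le)
  · rw [(sum_sub_Lest_nonneg_and_eq_zero_of_isMinOn c n k hkn.le fun _ =>
      isMinOn_maxMean_of_Lest_ne c hkn hL).2, zero_mul, zero_mul]

/-- The min-max estimates L form the minimum-L2 solution among all nondecreasing
sequences: for every nondecreasing T on {1,…,n},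
∑_{m=1}^{n} (c(m) − L_m)² ≤ ∑_{m=1}^{n} (c(m) − T_m)². -/
theorem Lest_min_L2 (n : ℕ) (hn : 1 ≤ n) (c : ℕ → ℝ) (T : ℕ → ℝ)
    (hT : ∀ i j, 1 ≤ i → i ≤ j → j ≤ n → T i ≤ T j) :
    ∑ m ∈ Finset.Icc 1 n, (c m - Lest c n m) ^ 2
      ≤ ∑ m ∈ Finset.Icc 1 n, (c m - T m) ^ 2 :=
  Lest_min_L2_general n c T hT
end
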